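/- Let τ = min{n ≥ 1 : X_n = 0} (which is almost surely finite). Then S_n → S_τ almost surely as n → ∞, where S_τ(ω) = S_{τ(ω)}(ω), and E(S_τ) = (p − q)/(1 − p + q). -/

import Mathlib

/-!
A nonzero step is followed, given the past, by a nonzero step with probability `p + q < 1`,
while a zero step is almost surely followed by another zero step. So the probability of
surviving `n` steps without a zero is `(p + q) ^ n`, which makes `τ` integrable and almost
surely positive; past `τ` the walk is frozen, hence `Sₙ → S_τ` with `|Sₙ| ≤ τ`. Since
`E[Xₙ₊₁] = (p - q) E[Xₙ]`, `E[Sₙ] = ∑_{k=1}^n (p - q)^k`, and dominated convergence gives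
`E[S_τ] = (p - q) / (1 - (p - q))`.
-/

open MeasureTheory ProbabilityTheory Filter Real
open scoped ENNReal NNReal Topology Classical

noncomputable section

/-- The σ-algebra `σ(X_1, …, X_n)` generated by the first `n` steps. -/
def sigmaUpTo {Ω : Type*} (X : ℕ → Ω → ℝ) (n : ℕ) : MeasurableSpace Ω :=
  MeasurableSpace.comap (fun ω (k : Fin n) => X ((k : ℕ) + 1) ω) inferInstance

/-- Weak convergence of a sequence of measures on `ℝ` (convergence in distribution):
integrals of every bounded continuous function converge. -/
def TendstoInDist (μs : ℕ → Measure ℝ) (ν : Measure ℝ) : Prop :=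
  ∀ f : BoundedContinuousFunction ℝ ℝ,
    Tendsto (fun n => ∫ x, f x ∂(μs n)) atTop (𝓝 (∫ x, f x ∂ν))

section General

variable {Ω : Type*}

theorem measurable_sInf_setOf {_ : MeasurableSpace Ω} {p : ℕ → Ω → Prop}
    (hp : ∀ n, MeasurableSet {ω | p n ω}) : Measurable fun ω => sInf {n | p n ω} := by
  set E := ⋃ n, {ω | p n ω}
  have h_ex : ∀ ω, ∃ n, p n ω ∨ ω ∉ E := fun ω => by
    by_cases h : ω ∈ E
    · obtain ⟨n, hn⟩ := Set.mem_iUnion.mp h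
      exact ⟨n, .inl hn⟩
    · exact ⟨0, .inr h⟩
  -- off `E` both infima are `0`: one of the empty set, the other of all of `ℕ`
  have h_eq : ∀ ω, sInf {n | p n ω} = sInf {n | p n ω ∨ ω ∉ E} := fun ω => by
    by_cases h : ω ∈ E
    · simp only [h, not_true_eq_false, or_false]
    · have h' : ∀ n, ¬ p n ω := by simpa [E] using h
      simp [h, h']
  convert measurable_find h_ex fun k => (hp k).union (MeasurableSet.iUnion hp).compl using 1
  funext ω
  rw [h_eq]
  convert Nat.sInf_def (s := {n | p n ω ∨ ω ∉ E}) (h_ex ω)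
  rfl

theorem lintegral_natCast_eq_tsum_measure_lt {_ : MeasurableSpace Ω} (μ : Measure Ω)
    {f : Ω → ℕ} (hf : Measurable f) :
    ∫⁻ ω, (f ω : ℝ≥0∞) ∂μ = ∑' n : ℕ, μ {ω | n < f ω} := by
  have h_pt : ∀ ω, (f ω : ℝ≥0∞) = ∑' n : ℕ, {ω | n < f ω}.indicator 1 ω := fun ω => by
    rw [tsum_eq_sum (s := Finset.range (f ω))
      fun n hn => Set.indicator_of_notMem (by simpa using hn) _,
      Finset.sum_congr rfl fun n hn =>
      Set.indicator_of_mem (s := {ω | n < f ω}) (Finset.mem_range.1 hn) (1 : Ω → ℝ≥0∞)]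
    simp
  have h_meas : ∀ n : ℕ, MeasurableSet {ω | n < f ω} := fun n => hf measurableSet_Ioi
  rw [lintegral_congr h_pt,
    lintegral_tsum fun n => (measurable_one.indicator (h_meas n)).aemeasurable]
  exact tsum_congr fun n => lintegral_indicator_one (h_meas n)

theorem measureReal_inter_eq_setIntegral_of_condExp_ae_eq {m m₀ : MeasurableSpace Ω}
    {μ : Measure Ω} [IsFiniteMeasure μ] (hm : m ≤ m₀) {B : Set Ω} (hB : MeasurableSet B)
    {g : Ω → ℝ} (hg : μ[B.indicator fun _ => (1 : ℝ) | m] =ᵐ[μ] g) {A : Set Ω}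
    (hA : MeasurableSet[m] A) : μ.real (A ∩ B) = ∫ ω in A, g ω ∂μ :=
  calc μ.real (A ∩ B) = ∫ ω in A, B.indicator (fun _ => (1 : ℝ)) ω ∂μ := by
        rw [setIntegral_indicator hB, setIntegral_const, smul_eq_mul, mul_one]
    _ = ∫ ω in A, μ[B.indicator fun _ => (1 : ℝ) | m] ω ∂μ :=
        (setIntegral_condExp hm ((integrable_const 1).indicator hB) hA).symm
    _ = ∫ ω in A, g ω ∂μ := integral_congr_ae (ae_restrict_of_ae hg)

theorem tendsto_sum_Icc_pow {x : ℝ} (hx : |x| < 1) :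
    Tendsto (fun n => ∑ k ∈ Finset.Icc 1 n, x ^ k) atTop (𝓝 (x / (1 - x))) := by
  have h := ((hasSum_geometric_of_abs_lt_one hx).mul_left x).tendsto_sum_nat
  rw [← div_eq_mul_inv] at h
  refine h.congr fun n => ?_
  rw [← Finset.Ico_add_one_right_eq_Icc, Finset.sum_Ico_eq_sum_range, add_tsub_cancel_right]
  simp [pow_succ', add_comm]

theorem sigmaUpTo_le [MeasurableSpace Ω] {X : ℕ → Ω → ℝ} (hX : ∀ n, Measurable (X n))
    (n : ℕ) : sigmaUpTo X n ≤ ‹MeasurableSpace Ω› :=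
  (measurable_pi_lambda _ fun _ => hX _).comap_le

theorem measurable_sigmaUpTo {X : ℕ → Ω → ℝ} {n k : ℕ} (hk : 1 ≤ k) (hkn : k ≤ n) :
    Measurable[sigmaUpTo X n] (X k) := by
  obtain ⟨j, rfl⟩ : ∃ j, k = j + 1 := ⟨k - 1, by omega⟩
  exact (measurable_pi_apply (X := fun _ : Fin n => ℝ) ⟨j, by omega⟩).comp
    (Measurable.of_comap_le le_rfl)

end General

section Paths

variable {Ω : Type*} {X : ℕ → Ω → ℝ} {ω : Ω} {n k : ℕ}

def survives (X : ℕ → Ω → ℝ) (n : ℕ) : Set Ω := ⋂ k ∈ Finset.Icc 1 n, {ω | X k ω ≠ 0}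

/-- `0` when `X` never vanishes, since `sInf ∅ = 0`. -/
def firstZero (X : ℕ → Ω → ℝ) (ω : Ω) : ℕ := sInf {n | 1 ≤ n ∧ X n ω = 0}

@[simp]
theorem survives_zero : survives X 0 = Set.univ := by
  simp [survives]

theorem survives_succ : survives X (n + 1) = survives X n ∩ {ω | X (n + 1) ω ≠ 0} := by
  rw [survives, ← Finset.insert_Icc_right_eq_Icc_add_one (by omega), Finset.set_biInter_insert,
    Set.inter_comm, survives]

theorem survives_inter_ne_zero (hn : 1 ≤ n) : survives X n ∩ {ω | X n ω ≠ 0} = survives X n :=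
  Set.inter_eq_left.2 <| Set.biInter_subset_of_mem (Finset.mem_Icc.2 ⟨hn, le_rfl⟩)

theorem measurableSet_survives : MeasurableSet[sigmaUpTo X n] (survives X n) :=
  Finset.measurableSet_biInter _ fun _ hk =>
    (measurable_sigmaUpTo (Finset.mem_Icc.1 hk).1 (Finset.mem_Icc.1 hk).2
      (measurableSet_singleton 0)).compl

theorem measurable_firstZero [MeasurableSpace Ω] (hX : ∀ n, Measurable (X n)) :
    Measurable (firstZero X) :=
  measurable_sInf_setOf fun n =>
    (MeasurableSet.const (1 ≤ n)).inter (hX n (measurableSet_singleton 0))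

theorem firstZero_mem_Icc (hk : 1 ≤ k) (h : X k ω = 0) : firstZero X ω ∈ Set.Icc 1 k :=
  ⟨(Nat.sInf_mem (s := {n | 1 ≤ n ∧ X n ω = 0}) ⟨k, hk, h⟩).1, Nat.sInf_le ⟨hk, h⟩⟩

theorem firstZero_spec (h : firstZero X ω ≠ 0) : 1 ≤ firstZero X ω ∧ X (firstZero X ω) ω = 0 :=
  Nat.sInf_mem (Nat.nonempty_of_pos_sInf (Nat.pos_of_ne_zero h))

theorem setOf_lt_firstZero_subset_survives : {ω | n < firstZero X ω} ⊆ survives X n := by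
  intro ω h
  simp only [survives, Set.mem_iInter]
  intro k hk h_zero
  have := firstZero_mem_Icc (Finset.mem_Icc.1 hk).1 h_zero
  exact absurd h (not_lt.2 (this.2.trans (Finset.mem_Icc.1 hk).2))

theorem setOf_firstZero_eq_zero_subset_survives : {ω | firstZero X ω = 0} ⊆ survives X n := by
  intro ω h
  simp only [survives, Set.mem_iInter]
  intro k hk h_zero
  have := firstZero_mem_Icc (Finset.mem_Icc.1 hk).1 h_zero
  exact absurd h (Nat.one_le_iff_ne_zero.1 this.1)

end Paths

section PartialSums

variable {x : ℕ → ℝ} {m n : ℕ}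

theorem sum_Icc_eq_of_forall_eq_zero {M : Type*} [AddCommMonoid M] {x : ℕ → M} (hmn : m ≤ n)
    (h : ∀ k, m < k → x k = 0) : ∑ k ∈ Finset.Icc 1 n, x k = ∑ k ∈ Finset.Icc 1 m, x k :=
  (Finset.sum_subset (Finset.Icc_subset_Icc_right hmn) fun k hk hk' => h k <| by
    simp only [Finset.mem_Icc] at hk hk'
    omega).symm

theorem abs_sum_Icc_le (h : ∀ k, 1 ≤ k → |x k| ≤ 1) : |∑ k ∈ Finset.Icc 1 n, x k| ≤ n :=
  calc |∑ k ∈ Finset.Icc 1 n, x k| ≤ ∑ k ∈ Finset.Icc 1 n, |x k| := Finset.abs_sum_le_sum_abs _ _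
    _ ≤ ∑ _k ∈ Finset.Icc 1 n, (1 : ℝ) :=
        Finset.sum_le_sum fun k hk => h k (Finset.mem_Icc.1 hk).1
    _ = n := by simp

end PartialSums

structure IsRecentStepWalk {Ω : Type*} [MeasurableSpace Ω] (P : Measure Ω) (p q : ℝ)
    (X : ℕ → Ω → ℝ) : Prop where
  measurable : ∀ n, Measurable (X n)
  mem : ∀ n, 1 ≤ n → ∀ ω, X n ω = 1 ∨ X n ω = -1 ∨ X n ω = 0
  measureReal_one : P.real {ω | X 1 ω = 1} = p
  measureReal_neg_one : P.real {ω | X 1 ω = -1} = q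
  condExp_one : ∀ n : ℕ, 1 ≤ n →
    P[Set.indicator {ω | X (n + 1) ω = 1} (fun _ => (1 : ℝ)) | sigmaUpTo X n]
      =ᵐ[P] fun ω =>
        p * (if X n ω = 1 then (1 : ℝ) else 0) + q * (if X n ω = -1 then (1 : ℝ) else 0)
  condExp_neg_one : ∀ n : ℕ, 1 ≤ n →
    P[Set.indicator {ω | X (n + 1) ω = -1} (fun _ => (1 : ℝ)) | sigmaUpTo X n]
      =ᵐ[P] fun ω =>
        q * (if X n ω = 1 then (1 : ℝ) else 0) + p * (if X n ω = -1 then (1 : ℝ) else 0)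

namespace IsRecentStepWalk

variable {Ω : Type*} [MeasurableSpace Ω] {P : Measure Ω} {p q : ℝ} {X : ℕ → Ω → ℝ}
  {A : Set Ω} {n k : ℕ}

theorem nonneg_left (hX : IsRecentStepWalk P p q X) : 0 ≤ p :=
  hX.measureReal_one ▸ measureReal_nonneg

theorem nonneg_right (hX : IsRecentStepWalk P p q X) : 0 ≤ q :=
  hX.measureReal_neg_one ▸ measureReal_nonneg

theorem measurableSet_eq (hX : IsRecentStepWalk P p q X) (k : ℕ) (c : ℝ) :
    MeasurableSet {ω | X k ω = c} :=
  hX.measurable k (measurableSet_singleton c)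

theorem measureReal_inter_ne_zero [IsFiniteMeasure P] (hX : IsRecentStepWalk P p q X)
    (hk : 1 ≤ k) (hA : MeasurableSet A) :
    P.real (A ∩ {ω | X k ω ≠ 0})
      = P.real (A ∩ {ω | X k ω = 1}) + P.real (A ∩ {ω | X k ω = -1}) := by
  have h_split : A ∩ {ω | X k ω ≠ 0} = (A ∩ {ω | X k ω = 1}) ∪ (A ∩ {ω | X k ω = -1}) := by
    ext ω
    rcases hX.mem k hk ω with h | h | h <;> norm_num [h]
  have h_disj : Disjoint (A ∩ {ω | X k ω = 1}) (A ∩ {ω | X k ω = -1}) :=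
    Set.disjoint_left.2 fun ω h₁ h₂ => by
      linarith [show X k ω = 1 from h₁.2, show X k ω = -1 from h₂.2]
  rw [h_split, measureReal_union h_disj (hA.inter (hX.measurableSet_eq k (-1)))]

theorem measureReal_inter_succ_of_condExp [IsFiniteMeasure P] (hX : IsRecentStepWalk P p q X)
    {c a b : ℝ}
    (hc : P[Set.indicator {ω | X (n + 1) ω = c} (fun _ => (1 : ℝ)) | sigmaUpTo X n]
      =ᵐ[P] fun ω =>
        a * (if X n ω = 1 then (1 : ℝ) else 0) + b * (if X n ω = -1 then (1 : ℝ) else 0))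
    (hA : MeasurableSet[sigmaUpTo X n] A) :
    P.real (A ∩ {ω | X (n + 1) ω = c})
      = a * P.real (A ∩ {ω | X n ω = 1}) + b * P.real (A ∩ {ω | X n ω = -1}) := by
  rw [measureReal_inter_eq_setIntegral_of_condExp_ae_eq (sigmaUpTo_le hX.measurable n)
    (hX.measurableSet_eq _ c) hc hA]
  have h_ite : ∀ (d : ℝ) ω, (if X n ω = d then (1 : ℝ) else 0)
      = {ω | X n ω = d}.indicator 1 ω := fun d ω => by
    simp [Set.indicator_apply]
  have h_int : ∀ d : ℝ, Integrable ({ω | X n ω = d}.indicator (1 : Ω → ℝ)) (P.restrict A) :=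
    fun d => (integrable_const 1).indicator (hX.measurableSet_eq n d)
  simp only [h_ite]
  rw [integral_add ((h_int 1).const_mul a) ((h_int (-1)).const_mul b), integral_const_mul,
    integral_const_mul, integral_indicator_one (hX.measurableSet_eq n 1),
    integral_indicator_one (hX.measurableSet_eq n (-1)),
    measureReal_restrict_apply (hX.measurableSet_eq n 1),
    measureReal_restrict_apply (hX.measurableSet_eq n (-1)), Set.inter_comm _ A,
    Set.inter_comm _ A]

theorem measureReal_inter_succ_ne_zero [IsFiniteMeasure P] (hX : IsRecentStepWalk P p q X)
    (hn : 1 ≤ n) (hA : MeasurableSet[sigmaUpTo X n] A) :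
    P.real (A ∩ {ω | X (n + 1) ω ≠ 0}) = (p + q) * P.real (A ∩ {ω | X n ω ≠ 0}) := by
  have hA₀ := sigmaUpTo_le hX.measurable n A hA
  rw [hX.measureReal_inter_ne_zero (by omega) hA₀, hX.measureReal_inter_ne_zero hn hA₀,
    hX.measureReal_inter_succ_of_condExp (hX.condExp_one n hn) hA,
    hX.measureReal_inter_succ_of_condExp (hX.condExp_neg_one n hn) hA]
  ring

theorem ae_absorbed [IsFiniteMeasure P] (hX : IsRecentStepWalk P p q X) :
    ∀ᵐ ω ∂P, ∀ n, 1 ≤ n → X n ω = 0 → X (n + 1) ω = 0 := by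
  rw [ae_all_iff]
  intro n
  by_cases hn : 1 ≤ n
  · have h_null : P.real ({ω | X n ω = 0} ∩ {ω | X (n + 1) ω ≠ 0}) = 0 := by
      rw [hX.measureReal_inter_succ_ne_zero hn (A := {ω | X n ω = 0})
        (measurable_sigmaUpTo hn le_rfl (measurableSet_singleton 0)),
        show {ω | X n ω = 0} ∩ {ω | X n ω ≠ 0} = ∅ from Set.inter_compl_self _]
      simp
    filter_upwards [measure_eq_zero_iff_ae_notMem.1 ((measureReal_eq_zero_iff).1 h_null)]
      with ω hω _ h_zero
    by_contra h_ne
    exact hω ⟨h_zero, h_ne⟩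
  · exact Eventually.of_forall fun ω h => absurd h hn

theorem measureReal_one_sub_measureReal_neg_one [IsFiniteMeasure P]
    (hX : IsRecentStepWalk P p q X) (hk : 1 ≤ k) :
    P.real {ω | X k ω = 1} - P.real {ω | X k ω = -1} = (p - q) ^ k := by
  induction k, hk using Nat.le_induction with
  | base => rw [hX.measureReal_one, hX.measureReal_neg_one, pow_one]
  | succ k hk ih =>
    have h₁ := hX.measureReal_inter_succ_of_condExp (hX.condExp_one k hk) MeasurableSet.univ
    have h₂ := hX.measureReal_inter_succ_of_condExp (hX.condExp_neg_one k hk) MeasurableSet.univ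
    simp only [Set.univ_inter] at h₁ h₂
    rw [h₁, h₂, pow_succ', ← ih]
    ring

theorem integral_eq_pow [IsFiniteMeasure P] (hX : IsRecentStepWalk P p q X) (hk : 1 ≤ k) :
    ∫ ω, X k ω ∂P = (p - q) ^ k := by
  have h_ind : ∀ ω, X k ω
      = {ω | X k ω = 1}.indicator 1 ω - {ω | X k ω = -1}.indicator (1 : Ω → ℝ) ω := fun ω => by
    rcases hX.mem k hk ω with h | h | h <;> norm_num [Set.indicator_apply, h]
  have h_int : ∀ c : ℝ, Integrable ({ω | X k ω = c}.indicator (1 : Ω → ℝ)) P :=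
    fun c => (integrable_const 1).indicator (hX.measurableSet_eq k c)
  rw [integral_congr_ae (Eventually.of_forall h_ind), integral_sub (h_int 1) (h_int (-1)),
    integral_indicator_one (hX.measurableSet_eq k 1),
    integral_indicator_one (hX.measurableSet_eq k (-1)),
    hX.measureReal_one_sub_measureReal_neg_one hk]

theorem abs_le_one (hX : IsRecentStepWalk P p q X) (hk : 1 ≤ k) (ω : Ω) : |X k ω| ≤ 1 := by
  rcases hX.mem k hk ω with h | h | h <;> norm_num [h]

theorem integrable [IsFiniteMeasure P] (hX : IsRecentStepWalk P p q X) (hk : 1 ≤ k) :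
    Integrable (X k) P :=
  .of_bound (hX.measurable k).aestronglyMeasurable 1 (.of_forall (hX.abs_le_one hk))

section Probability

variable [IsProbabilityMeasure P]

theorem measureReal_survives (hX : IsRecentStepWalk P p q X) (n : ℕ) :
    P.real (survives X n) = (p + q) ^ n := by
  induction n with
  | zero => simp
  | succ n ih =>
    rw [survives_succ]
    rcases Nat.eq_zero_or_pos n with rfl | hn
    · rw [survives_zero, hX.measureReal_inter_ne_zero le_rfl MeasurableSet.univ,
        Set.univ_inter, Set.univ_inter, hX.measureReal_one, hX.measureReal_neg_one, zero_add,
        pow_one]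
    · rw [hX.measureReal_inter_succ_ne_zero hn measurableSet_survives,
        survives_inter_ne_zero hn, ih, pow_succ']

theorem measure_firstZero_eq_zero (hX : IsRecentStepWalk P p q X) (hpq : p + q < 1) :
    P {ω | firstZero X ω = 0} = 0 := by
  have h_le : ∀ n, P.real {ω | firstZero X ω = 0} ≤ (p + q) ^ n := fun n =>
    hX.measureReal_survives n ▸ measureReal_mono setOf_firstZero_eq_zero_subset_survives
  have h_lim := tendsto_pow_atTop_nhds_zero_of_lt_one
    (add_nonneg hX.nonneg_left hX.nonneg_right) hpq
  exact (measureReal_eq_zero_iff).1 (le_antisymm (ge_of_tendsto' h_lim h_le) measureReal_nonneg)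

theorem integrable_firstZero (hX : IsRecentStepWalk P p q X) (hpq : p + q < 1) :
    Integrable (fun ω => (firstZero X ω : ℝ)) P := by
  have hτ := measurable_firstZero hX.measurable
  have h₀ : 0 ≤ p + q := add_nonneg hX.nonneg_left hX.nonneg_right
  have h_le : ∀ n : ℕ, P {ω | n < firstZero X ω} ≤ ENNReal.ofReal ((p + q) ^ n) := fun n => by
    rw [← hX.measureReal_survives n, ofReal_measureReal]
    exact measure_mono setOf_lt_firstZero_subset_survives
  refine ⟨(measurable_from_top.comp hτ).aestronglyMeasurable, ?_⟩
  rw [hasFiniteIntegral_iff_ofReal (.of_forall fun ω => Nat.cast_nonneg _)]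
  simp only [ENNReal.ofReal_natCast]
  calc ∫⁻ ω, (firstZero X ω : ℝ≥0∞) ∂P = ∑' n : ℕ, P {ω | n < firstZero X ω} :=
        lintegral_natCast_eq_tsum_measure_lt P hτ
    _ ≤ ∑' n : ℕ, ENNReal.ofReal ((p + q) ^ n) := ENNReal.tsum_le_tsum h_le
    _ < ⊤ := by
        rw [← ENNReal.ofReal_tsum_of_nonneg (fun n => pow_nonneg h₀ n)
          (summable_geometric_of_lt_one h₀ hpq)]
        exact ENNReal.ofReal_lt_top

theorem ae_eq_zero_of_firstZero_le (hX : IsRecentStepWalk P p q X) (hpq : p + q < 1) :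
    ∀ᵐ ω ∂P, ∀ k, firstZero X ω ≤ k → X k ω = 0 := by
  have h_ne : ∀ᵐ ω ∂P, firstZero X ω ≠ 0 :=
    measure_eq_zero_iff_ae_notMem.1 (hX.measure_firstZero_eq_zero hpq)
  filter_upwards [hX.ae_absorbed, h_ne] with ω h_absorbed h_ne k hk
  obtain ⟨h_one, h_zero⟩ := firstZero_spec h_ne
  induction k, hk using Nat.le_induction with
  | base => exact h_zero
  | succ k hk ih => exact h_absorbed k (h_one.trans hk) ih

theorem ae_tendsto_sum_Icc (hX : IsRecentStepWalk P p q X) (hpq : p + q < 1) :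
    ∀ᵐ ω ∂P, Tendsto (fun n => ∑ k ∈ Finset.Icc 1 n, X k ω) atTop
      (𝓝 (∑ k ∈ Finset.Icc 1 (firstZero X ω), X k ω)) := by
  filter_upwards [hX.ae_eq_zero_of_firstZero_le hpq] with ω hω
  exact tendsto_atTop_of_eventually_const fun n hn =>
    sum_Icc_eq_of_forall_eq_zero hn fun k hk => hω k hk.le

theorem ae_abs_sum_Icc_le_firstZero (hX : IsRecentStepWalk P p q X) (hpq : p + q < 1) :
    ∀ᵐ ω ∂P, ∀ n, |∑ k ∈ Finset.Icc 1 n, X k ω| ≤ firstZero X ω := by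
  filter_upwards [hX.ae_eq_zero_of_firstZero_le hpq] with ω hω n
  have h_abs : ∀ k, 1 ≤ k → |X k ω| ≤ 1 := fun k hk => hX.abs_le_one hk ω
  rcases le_total n (firstZero X ω) with h | h
  · exact (abs_sum_Icc_le h_abs).trans (by exact_mod_cast h)
  · rw [sum_Icc_eq_of_forall_eq_zero h fun k hk => hω k hk.le]
    exact abs_sum_Icc_le h_abs

theorem integral_sum_Icc_firstZero (hX : IsRecentStepWalk P p q X) (hpq : p + q < 1) :
    ∫ ω, ∑ k ∈ Finset.Icc 1 (firstZero X ω), X k ω ∂P = (p - q) / (1 - (p - q)) := by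
  have h_meas : ∀ n, AEStronglyMeasurable (fun ω => ∑ k ∈ Finset.Icc 1 n, X k ω) P :=
    fun n => (Finset.measurable_sum _ fun k _ => hX.measurable k).aestronglyMeasurable
  have h_bound : ∀ n, ∀ᵐ ω ∂P, ‖∑ k ∈ Finset.Icc 1 n, X k ω‖ ≤ firstZero X ω := fun n =>
    (hX.ae_abs_sum_Icc_le_firstZero hpq).mono fun ω h => h n
  have h_int : ∀ n, ∫ ω, ∑ k ∈ Finset.Icc 1 n, X k ω ∂P = ∑ k ∈ Finset.Icc 1 n, (p - q) ^ k :=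
    fun n => by
      rw [integral_finsetSum _ fun k hk => hX.integrable (Finset.mem_Icc.1 hk).1]
      exact Finset.sum_congr rfl fun k hk => hX.integral_eq_pow (Finset.mem_Icc.1 hk).1
  refine tendsto_nhds_unique (tendsto_integral_of_dominated_convergence _ h_meas
    (hX.integrable_firstZero hpq) h_bound (hX.ae_tendsto_sum_Icc hpq)) ?_
  simp_rw [h_int]
  exact tendsto_sum_Icc_pow <| abs_lt.2
    ⟨by linarith [hX.nonneg_left], by linarith [hX.nonneg_right]⟩

end Probability

end IsRecentStepWalk

theorem erwd_recent_step_memory_limit_general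
    {Ω : Type*} [MeasurableSpace Ω] (P : Measure Ω) [IsProbabilityMeasure P]
    (p q r : ℝ) (hp : 0 < p) (hq : 0 < q)
    (hr : 0 < r) (hpqr : p + q + r = 1)
    (X : ℕ → Ω → ℝ) (hXmeas : ∀ n, Measurable (X n))
    (hXval : ∀ n, 1 ≤ n → ∀ ω, X n ω = 1 ∨ X n ω = -1 ∨ X n ω = 0)
    (hX1p : P {ω | X 1 ω = 1} = ENNReal.ofReal p)
    (hX1q : P {ω | X 1 ω = -1} = ENNReal.ofReal q)
    (hcondp : ∀ n : ℕ, 1 ≤ n →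
      P[Set.indicator {ω | X (n + 1) ω = 1} (fun _ => (1 : ℝ)) | sigmaUpTo X n]
        =ᵐ[P] fun ω =>
          p * (if X n ω = 1 then (1 : ℝ) else 0) + q * (if X n ω = -1 then (1 : ℝ) else 0))
    (hcondq : ∀ n : ℕ, 1 ≤ n →
      P[Set.indicator {ω | X (n + 1) ω = -1} (fun _ => (1 : ℝ)) | sigmaUpTo X n]
        =ᵐ[P] fun ω =>
          q * (if X n ω = 1 then (1 : ℝ) else 0) + p * (if X n ω = -1 then (1 : ℝ) else 0))
    (S : ℕ → Ω → ℝ) (hS : ∀ n ω, S n ω = ∑ k ∈ Finset.Icc 1 n, X k ω)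
    (τ : Ω → ℕ) (hτ : ∀ ω, τ ω = sInf {n : ℕ | 1 ≤ n ∧ X n ω = 0}) :
    (∀ᵐ ω ∂P, Tendsto (fun n : ℕ => S n ω) atTop (𝓝 (S (τ ω) ω))) ∧
    (∫ ω, S (τ ω) ω ∂P) = (p - q) / (1 - p + q) := by
  obtain rfl : τ = firstZero X := funext hτ
  obtain rfl : S = fun n ω => ∑ k ∈ Finset.Icc 1 n, X k ω := funext fun n => funext (hS n)
  have hX : IsRecentStepWalk P p q X :=
    { measurable := hXmeas
      mem := hXval
      measureReal_one := by rw [measureReal_def, hX1p, ENNReal.toReal_ofReal hp.le]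
      measureReal_neg_one := by rw [measureReal_def, hX1q, ENNReal.toReal_ofReal hq.le]
      condExp_one := hcondp
      condExp_neg_one := hcondq }
  have hpq : p + q < 1 := by linarith
  refine ⟨hX.ae_tendsto_sum_Icc hpq, ?_⟩
  rw [hX.integral_sum_Icc_firstZero hpq]
  ring

/-- for the ERWD remembering only the most recent step, with
`τ = min{n ≥ 1 : Xₙ = 0}` (a.s. finite), `Sₙ → S_τ` almost surely and
`E(S_τ) = (p−q)/(1−p+q)`. -/
theorem erwd_recent_step_memory_limit
    {Ω : Type*} [MeasurableSpace Ω] (P : Measure Ω) [IsProbabilityMeasure P]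
    (p q r : ℝ) (hp : 0 < p) (hp1 : p < 1) (hq : 0 < q) (hq1 : q < 1)
    (hr : 0 < r) (hr1 : r < 1) (hpqr : p + q + r = 1)
    (X : ℕ → Ω → ℝ) (hXmeas : ∀ n, Measurable (X n))
    (hXval : ∀ n, 1 ≤ n → ∀ ω, X n ω = 1 ∨ X n ω = -1 ∨ X n ω = 0)
    (hX1p : P {ω | X 1 ω = 1} = ENNReal.ofReal p)
    (hX1q : P {ω | X 1 ω = -1} = ENNReal.ofReal q)
    (hX1r : P {ω | X 1 ω = 0} = ENNReal.ofReal r)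
    (hcondp : ∀ n : ℕ, 1 ≤ n →
      P[Set.indicator {ω | X (n + 1) ω = 1} (fun _ => (1 : ℝ)) | sigmaUpTo X n]
        =ᵐ[P] fun ω =>
          p * (if X n ω = 1 then (1 : ℝ) else 0) + q * (if X n ω = -1 then (1 : ℝ) else 0))
    (hcondq : ∀ n : ℕ, 1 ≤ n →
      P[Set.indicator {ω | X (n + 1) ω = -1} (fun _ => (1 : ℝ)) | sigmaUpTo X n]
        =ᵐ[P] fun ω =>
          q * (if X n ω = 1 then (1 : ℝ) else 0) + p * (if X n ω = -1 then (1 : ℝ) else 0))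
    (S : ℕ → Ω → ℝ) (hS : ∀ n ω, S n ω = ∑ k ∈ Finset.Icc 1 n, X k ω)
    (τ : Ω → ℕ) (hτ : ∀ ω, τ ω = sInf {n : ℕ | 1 ≤ n ∧ X n ω = 0}) :
    (∀ᵐ ω ∂P, Tendsto (fun n : ℕ => S n ω) atTop (𝓝 (S (τ ω) ω))) ∧
    (∫ ω, S (τ ω) ω ∂P) = (p - q) / (1 - p + q) :=
  erwd_recent_step_memory_limit_general P p q r hp hq hr hpqr X hXmeas hXval hX1p hX1q hcondp hcondq
    S hS τ hτ
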